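/- For all lists A, B, C over a type with decidable equality, d(A ++ C, B ++ C) = d(A, B). In particular, if the p characters of A following position x coincide with the p characters of B following position y, then d(A.take (x+p), B.take (y+p)) = d(A.take x, B.take y): matching a common prefix of the suffixes for free (sliding along zero-weight diagonal edges) preserves the edit distance. -/

import Mathlib

/-- Cost structure for Levenshtein edit distance (as in Mathlib's former `Levenshtein.Cost`). -/
structure Levenshtein.Cost (α β δ : Type*) where
  delete : α → δ
  insert : β → δ
  substitute : α → β → δ

/-- The default cost structure (as in Mathlib's former `Levenshtein.defaultCost`). -/
def Levenshtein.defaultCost {α : Type*} [DecidableEq α] : Levenshtein.Cost α α ℕ where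
  delete _ := 1
  insert _ := 1
  substitute a b := if a = b then 0 else 1

/-- Helper for `suffixLevenshtein` (as in Mathlib's former `Levenshtein.impl`). -/
def Levenshtein.impl {α β δ : Type*} [AddZeroClass δ] [Min δ] (C : Levenshtein.Cost α β δ)
    (xs : List α) (y : β) (d : {r : List δ // 0 < r.length}) : {r : List δ // 0 < r.length} :=
  let ⟨ds, w⟩ := d
  xs.zip (ds.zip ds.tail) |>.foldr
    (init := ⟨[ds.getLast (List.length_pos_iff.mp w) + C.insert y], by simp⟩)
    (fun ⟨x, d₀, d₁⟩ ⟨r, w⟩ =>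
      ⟨min (C.delete x + r[0]) (min (C.insert y + d₀) (C.substitute x y + d₁)) :: r, by simp⟩)

/-- As in Mathlib's former `suffixLevenshtein`. -/
def suffixLevenshtein {α β δ : Type*} [AddZeroClass δ] [Min δ] (C : Levenshtein.Cost α β δ)
    (xs : List α) (ys : List β) : {r : List δ // 0 < r.length} :=
  ys.foldr
    (Levenshtein.impl C xs)
    (xs.foldr (init := ⟨[0], by simp⟩) (fun a ⟨r, w⟩ => ⟨(C.delete a + r[0]) :: r, by simp⟩))

/-- As in Mathlib's former `levenshtein`. -/
def levenshtein {α β δ : Type*} [AddZeroClass δ] [Min δ] (C : Levenshtein.Cost α β δ)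
    (xs : List α) (ys : List β) : δ :=
  let ⟨r, w⟩ := suffixLevenshtein C xs ys
  r[0]

/-- The unit-cost Levenshtein edit distance. -/
def editDist {α : Type*} [DecidableEq α] (A B : List α) : ℕ :=
  levenshtein Levenshtein.defaultCost A B

/-!
Unfolding the dynamic program gives the recursion
`d(a :: A, b :: B) = min (d(A, b :: B) + 1) (min (d(a :: A, B) + 1) (d(A, B) + [a ≠ b]))`
with boundary values `d([], B) = |B|` and `d(A, []) = |A|`. Appending the same `C` to both
arguments leaves the recursion unchanged, so by induction on `A` and `B` only the boundary has to be
checked: `d(C, B ++ C) = |B|`, where `|B|` insertions give `≤` and `|B| ≤ |C| + d(C, B ++ C)`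
gives `≥`. The second claim is the first one applied to the common block, since
`A.take (x + p) = A.take x ++ (A.drop x).take p`.
-/

namespace Levenshtein

variable {α β δ : Type*} [AddZeroClass δ] [Min δ] {C : Cost α β δ}

theorem impl_cons (x : α) (xs : List α) (y : β) (d : δ) (ds : List δ)
    (w : 0 < (d :: ds).length) (w' : 0 < ds.length) :
    impl C (x :: xs) y ⟨d :: ds, w⟩ =
      let ⟨r, w⟩ := impl C xs y ⟨ds, w'⟩
      ⟨min (C.delete x + r[0]) (min (C.insert y + d) (C.substitute x y + ds[0])) :: r, by simp⟩ :=
  match ds, w' with | _ :: _, _ => rfl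

theorem impl_cons_fst_zero (x : α) (xs : List α) (y : β) (d : δ) (ds : List δ)
    (w : 0 < (d :: ds).length) (h : 0 < (impl C (x :: xs) y ⟨d :: ds, w⟩).1.length)
    (w' : 0 < ds.length) :
    (impl C (x :: xs) y ⟨d :: ds, w⟩).1[0] =
      let ⟨r, w⟩ := impl C xs y ⟨ds, w'⟩
      min (C.delete x + r[0]) (min (C.insert y + d) (C.substitute x y + ds[0])) :=
  match ds, w' with | _ :: _, _ => rfl

theorem impl_nil_fst_zero (y : β) (a : δ) (d : {r : List δ // 0 < r.length})
    (hd : d.1 = [a]) (h : 0 < (impl C [] y d).1.length) :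
    (impl C [] y d).1[0] = a + C.insert y := by
  obtain ⟨r, w⟩ := d
  subst hd
  rfl

theorem impl_length (xs : List α) (y : β) (d : {r : List δ // 0 < r.length})
    (w : d.1.length = xs.length + 1) :
    (impl C xs y d).1.length = xs.length + 1 := by
  induction xs generalizing d with
  | nil => rfl
  | cons x xs ih =>
    match d, w with
    | ⟨_ :: d₂ :: ds, _⟩, w =>
      rw [impl_cons (w' := by simp), List.length_cons, ih ⟨d₂ :: ds, by simp⟩ (by simpa using w),
        List.length_cons]

end Levenshtein

open Levenshtein

theorem Subtype.eq_of_getElem_zero_eq_of_tail_eq {α : Type*} {x y : {r : List α // 0 < r.length}}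
    (h₀ : x.1[0]'x.2 = y.1[0]'y.2) (h : x.1.tail = y.1.tail) : x = y := by
  match x, y with
  | ⟨_ :: _, _⟩, ⟨_ :: _, _⟩ => simp_all

section Recursion

variable {α β δ : Type*} [AddZeroClass δ] [Min δ] (C : Cost α β δ)

theorem suffixLevenshtein_length (xs : List α) (ys : List β) :
    (suffixLevenshtein C xs ys).1.length = xs.length + 1 := by
  induction ys with
  | nil =>
    induction xs with
    | nil => rfl
    | cons _ xs ih => simpa [suffixLevenshtein] using ih
  | cons y ys ih => exact impl_length _ y _ ih

theorem suffixLevenshtein_cons₁ (x : α) (xs : List α) (ys : List β) :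
    suffixLevenshtein C (x :: xs) ys =
      ⟨levenshtein C (x :: xs) ys :: (suffixLevenshtein C xs ys).1, by simp⟩ := by
  induction ys with
  | nil => rfl
  | cons y ys ih =>
    refine Subtype.eq_of_getElem_zero_eq_of_tail_eq rfl ?_
    show (impl C (x :: xs) y (suffixLevenshtein C (x :: xs) ys)).1.tail = _
    rw [ih, impl_cons (w' := by simp [suffixLevenshtein_length])]
    rfl

theorem levenshtein_cons_cons (x : α) (xs : List α) (y : β) (ys : List β) :
    levenshtein C (x :: xs) (y :: ys) =
      min (C.delete x + levenshtein C xs (y :: ys))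
        (min (C.insert y + levenshtein C (x :: xs) ys)
          (C.substitute x y + levenshtein C xs ys)) := by
  show (impl C (x :: xs) y (suffixLevenshtein C (x :: xs) ys)).1[0]'(by
    rw [impl_length] <;> simp [suffixLevenshtein_length]) = _
  simp only [suffixLevenshtein_cons₁]
  rw [impl_cons_fst_zero (w' := by simp [suffixLevenshtein_length])]
  rfl

theorem levenshtein_nil_cons (y : β) (ys : List β) :
    levenshtein C ([] : List α) (y :: ys) = levenshtein C [] ys + C.insert y := by
  have h : (suffixLevenshtein C ([] : List α) ys).1 = [levenshtein C [] ys] := by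
    have hl := suffixLevenshtein_length C ([] : List α) ys
    show _ = [(suffixLevenshtein C [] ys).1[0]'(by simp [hl])]
    match suffixLevenshtein C ([] : List α) ys, hl with
    | ⟨[a], _⟩, _ => rfl
  show (impl C [] y (suffixLevenshtein C [] ys)).1[0]'(by
    rw [impl_length] <;> simp [suffixLevenshtein_length]) = _
  rw [impl_nil_fst_zero y _ _ h]

end Recursion

section EditDist

variable {α : Type*} [DecidableEq α]

@[simp] theorem editDist_nil_left (B : List α) : editDist [] B = B.length := by
  induction B with
  | nil => rfl
  | cons b B ih =>
    rw [editDist, levenshtein_nil_cons]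
    exact congrArg (· + 1) ih

@[simp] theorem editDist_nil_right (A : List α) : editDist A [] = A.length := by
  induction A with
  | nil => rfl
  | cons a A ih =>
    show 1 + editDist A [] = _
    rw [ih, add_comm, List.length_cons]

theorem editDist_cons_cons (a b : α) (A B : List α) :
    editDist (a :: A) (b :: B) =
      min (editDist A (b :: B) + 1)
        (min (editDist (a :: A) B + 1) (editDist A B + if a = b then 0 else 1)) := by
  simp only [editDist, levenshtein_cons_cons, defaultCost, add_comm]

theorem editDist_comm (A B : List α) : editDist A B = editDist B A := by
  induction A generalizing B with
  | nil => simp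
  | cons a A ihA =>
    induction B with
    | nil => simp
    | cons b B ihB =>
      rw [editDist_cons_cons, editDist_cons_cons, ihA, ihA, ihB, min_left_comm]
      simp only [eq_comm]

theorem editDist_self (A : List α) : editDist A A = 0 := by
  induction A with
  | nil => rfl
  | cons a A ih => simp [editDist_cons_cons, ih]

theorem editDist_cons_right_le (A : List α) (b : α) (B : List α) :
    editDist A (b :: B) ≤ editDist A B + 1 := by
  cases A with
  | nil => simp
  | cons a A => simp [editDist_cons_cons]

theorem length_le_length_add_editDist (A B : List α) :
    B.length ≤ A.length + editDist A B := by
  induction A generalizing B with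
  | nil => simp
  | cons a A ihA =>
    induction B with
    | nil => simp
    | cons b B ihB =>
      have h₁ := ihA (b :: B)
      have h₂ := ihA B
      simp only [List.length_cons] at h₁ ihB ⊢
      rw [editDist_cons_cons]
      omega

theorem editDist_append_self (B C : List α) : editDist C (B ++ C) = B.length := by
  refine le_antisymm ?_ ?_
  · induction B with
    | nil => simp [editDist_self]
    | cons b B ih => exact (editDist_cons_right_le _ _ _).trans (by simpa using ih)
  · have := length_le_length_add_editDist C (B ++ C)
    rw [List.length_append] at this
    omega

theorem editDist_append_right (A B C : List α) :
    editDist (A ++ C) (B ++ C) = editDist A B := by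
  induction A generalizing B with
  | nil => simp [editDist_append_self]
  | cons a A ihA =>
    induction B with
    | nil =>
      rw [List.nil_append, editDist_comm, editDist_append_self, editDist_nil_right]
    | cons b B ihB => simp only [List.cons_append, editDist_cons_cons, ← ihA, ← ihB]

end EditDist

/-- Appending a common suffix preserves the edit distance; in particular, if the `p` characters
of `A` following position `x` coincide with the `p` characters of `B` following position `y`,
then sliding along the zero-weight diagonal edges preserves the edit distance. -/
theorem editDist_append_right_cancel {α : Type*} [DecidableEq α] :
    (∀ A B C : List α, editDist (A ++ C) (B ++ C) = editDist A B) ∧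
    (∀ (A B : List α) (x y p : ℕ), (A.drop x).take p = (B.drop y).take p →
      editDist (A.take (x + p)) (B.take (y + p)) = editDist (A.take x) (B.take y)) := by
  refine ⟨editDist_append_right, fun A B x y p h => ?_⟩
  rw [List.take_add, List.take_add, h]
  exact editDist_append_right _ _ _
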